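/- (Converse projection lemma, full version) Let Θ₀ be symmetric m×m and Z₁, Z₂ as above. If N₁ᵀ Θ₀ N₁ ≺ 0 and N₂ᵀ Θ₀ N₂ ≺ 0 where Nᵢ are bases of ker(Zᵢ), then there exists a matrix X such that Θ₀ + Z₁ᵀ X Z₂ + Z₂ᵀ Xᵀ Z₁ ≺ 0. -/

import Mathlib

open Matrix

/-- A symmetric real matrix is negative definite: `vᵀ M v < 0` for all nonzero `v`. -/
def NegDef {m : Type*} [Fintype m] (M : Matrix m m ℝ) : Prop :=
  ∀ v : m → ℝ, v ≠ 0 → v ⬝ᵥ M.mulVec v < 0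

private lemma dotSymm {m : ℕ} {Θ : Matrix (Fin m) (Fin m) ℝ} (hΘ : Θ.IsSymm)
    (x y : Fin m → ℝ) : x ⬝ᵥ Θ *ᵥ y = y ⬝ᵥ Θ *ᵥ x := by
  rw [Matrix.dotProduct_mulVec, ← Matrix.mulVec_transpose, hΘ.eq, dotProduct_comm]

private lemma sandwich {m : ℕ} (A M B : Matrix (Fin m) (Fin m) ℝ) (u v : Fin m → ℝ) :
    u ⬝ᵥ (Aᵀ * M * B) *ᵥ v = (A *ᵥ u) ⬝ᵥ M *ᵥ (B *ᵥ v) := by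
  rw [← Matrix.mulVec_mulVec, ← Matrix.mulVec_mulVec, Matrix.dotProduct_mulVec u,
    Matrix.vecMul_transpose]

private lemma ext_mulVec {a b : ℕ} {A B : Matrix (Fin a) (Fin b) ℝ}
    (h : ∀ v, A *ᵥ v = B *ᵥ v) : A = B := by
  ext i j
  have := congrFun (h (Pi.single j 1)) i
  simpa [Matrix.mulVec_single] using this

private lemma exists_ginv {k m : ℕ} (Z : Matrix (Fin k) (Fin m) ℝ) :
    ∃ S : Matrix (Fin m) (Fin k) ℝ, ∀ v, Z *ᵥ (S *ᵥ (Z *ᵥ v)) = Z *ᵥ v := by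
  classical
  obtain ⟨U, hU⟩ := Submodule.exists_isCompl (LinearMap.range (Matrix.mulVecLin Z))
  obtain ⟨σ, hσ⟩ := (Matrix.mulVecLin Z).rangeRestrict.exists_rightInverse_of_surjective
      (LinearMap.range_rangeRestrict _)
  refine ⟨LinearMap.toMatrix'
    (σ ∘ₗ (LinearMap.range (Matrix.mulVecLin Z)).linearProjOfIsCompl U hU), fun v => ?_⟩
  have hS : ∀ w, LinearMap.toMatrix'
      (σ ∘ₗ (LinearMap.range (Matrix.mulVecLin Z)).linearProjOfIsCompl U hU) *ᵥ w
      = (σ ∘ₗ (LinearMap.range (Matrix.mulVecLin Z)).linearProjOfIsCompl U hU) w := by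
    intro w; rw [← Matrix.toLin'_apply, Matrix.toLin'_toMatrix']
  rw [hS]
  have hmem : Z *ᵥ v ∈ LinearMap.range (Matrix.mulVecLin Z) := ⟨v, rfl⟩
  have h₁ : (LinearMap.range (Matrix.mulVecLin Z)).linearProjOfIsCompl U hU (Z *ᵥ v)
      = ⟨Z *ᵥ v, hmem⟩ :=
    Submodule.linearProjOfIsCompl_apply_left hU ⟨Z *ᵥ v, hmem⟩
  have h₂ : ∀ y : LinearMap.range (Matrix.mulVecLin Z), Z *ᵥ (σ y) = y := by
    intro y
    have h := congrArg (fun f : _ →ₗ[ℝ] _ => f y) hσ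
    have h' := congrArg Subtype.val h
    simpa using h'
  simp only [LinearMap.comp_apply, h₁]
  exact h₂ _

private lemma exists_factor {m k₁ k₂ : ℕ} (Z₁ : Matrix (Fin k₁) (Fin m) ℝ)
    (Z₂ : Matrix (Fin k₂) (Fin m) ℝ) (C : Matrix (Fin m) (Fin m) ℝ)
    (hL : ∀ u, Z₁ *ᵥ u = 0 → Cᵀ *ᵥ u = 0)
    (hR : ∀ v, Z₂ *ᵥ v = 0 → C *ᵥ v = 0) :
    ∃ X : Matrix (Fin k₁) (Fin k₂) ℝ, Z₁ᵀ * X * Z₂ = C := by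
  obtain ⟨S₁, hS₁⟩ := exists_ginv Z₁
  obtain ⟨S₂, hS₂⟩ := exists_ginv Z₂
  refine ⟨S₁ᵀ * C * S₂, ?_⟩
  have e₂ : C * (S₂ * Z₂) = C := by
    apply ext_mulVec
    intro v
    rw [← Matrix.mulVec_mulVec, ← Matrix.mulVec_mulVec]
    have hz : Z₂ *ᵥ (S₂ *ᵥ (Z₂ *ᵥ v) - v) = 0 := by
      rw [Matrix.mulVec_sub, hS₂, sub_self]
    have h := hR _ hz
    rw [Matrix.mulVec_sub] at h
    exact sub_eq_zero.mp h
  have e₁ : Cᵀ * (S₁ * Z₁) = Cᵀ := by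
    apply ext_mulVec
    intro u
    rw [← Matrix.mulVec_mulVec, ← Matrix.mulVec_mulVec]
    have hz : Z₁ *ᵥ (S₁ *ᵥ (Z₁ *ᵥ u) - u) = 0 := by
      rw [Matrix.mulVec_sub, hS₁, sub_self]
    have h := hL _ hz
    rw [Matrix.mulVec_sub] at h
    exact sub_eq_zero.mp h
  have e₁' : (S₁ * Z₁)ᵀ * C = C := by
    have h := congrArg Matrix.transpose e₁
    simpa [Matrix.transpose_mul] using h
  calc Z₁ᵀ * (S₁ᵀ * C * S₂) * Z₂ = ((S₁ * Z₁)ᵀ * C) * (S₂ * Z₂) := by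
        simp only [Matrix.transpose_mul, Matrix.mul_assoc]
    _ = C * (S₂ * Z₂) := by rw [e₁']
    _ = C := e₂

private lemma exists_G {m : ℕ} (Θ : Matrix (Fin m) (Fin m) ℝ) (hΘ : Θ.IsSymm)
    (K : Submodule ℝ (Fin m → ℝ))
    (hND : ∀ z ∈ K, z ≠ 0 → z ⬝ᵥ Θ *ᵥ z < 0) :
    ∃ G : Matrix (Fin m) (Fin m) ℝ,
      (∀ w, G *ᵥ w ∈ K) ∧ (∀ z ∈ K, ∀ w, z ⬝ᵥ Θ *ᵥ (G *ᵥ w) = z ⬝ᵥ Θ *ᵥ w) := by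
  classical
  let Bf : (Fin m → ℝ) →ₗ[ℝ] (Fin m → ℝ) →ₗ[ℝ] ℝ :=
    LinearMap.mk₂ ℝ (fun x y => x ⬝ᵥ Θ *ᵥ y)
      (fun x x' y => by simp only [add_dotProduct])
      (fun r x y => by simp only [smul_dotProduct])
      (fun x y y' => by simp only [Matrix.mulVec_add, dotProduct_add])
      (fun r x y => by simp only [Matrix.mulVec_smul, dotProduct_smul])
  let L : K →ₗ[ℝ] (K →ₗ[ℝ] ℝ) := (Bf.compl₂ K.subtype).domRestrict K
  have hLapp : ∀ (z z' : K), L z z' = (z : Fin m → ℝ) ⬝ᵥ Θ *ᵥ (z' : Fin m → ℝ) :=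
    fun z z' => rfl
  have hinj : Function.Injective L := by
    rw [injective_iff_map_eq_zero]
    intro z hz
    by_contra hne
    have h0 : L z z = 0 := by rw [hz]; rfl
    rw [hLapp] at h0
    have hzne : (z : Fin m → ℝ) ≠ 0 := fun h => hne (Subtype.ext h)
    have := hND z z.2 hzne
    linarith
  have hfr : Module.finrank ℝ K = Module.finrank ℝ (K →ₗ[ℝ] ℝ) :=
    (Subspace.dual_finrank_eq (V := K)).symm
  have hsurj : Function.Surjective L :=
    (LinearMap.injective_iff_surjective_of_finrank_eq_finrank hfr).mp hinj
  let e := LinearEquiv.ofBijective L ⟨hinj, hsurj⟩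
  let φ : (Fin m → ℝ) →ₗ[ℝ] (K →ₗ[ℝ] ℝ) := Bf.flip.compl₂ K.subtype
  let gl : (Fin m → ℝ) →ₗ[ℝ] (Fin m → ℝ) := K.subtype ∘ₗ e.symm.toLinearMap ∘ₗ φ
  have hglmem : ∀ w, gl w ∈ K := fun w => (e.symm (φ w)).2
  have hGw : ∀ w, LinearMap.toMatrix' gl *ᵥ w = gl w := by
    intro w; rw [← Matrix.toLin'_apply, Matrix.toLin'_toMatrix']
  refine ⟨LinearMap.toMatrix' gl, fun w => by rw [hGw]; exact hglmem w, fun z hz w => ?_⟩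
  rw [hGw]
  have key : L (e.symm (φ w)) = φ w := e.apply_symm_apply (φ w)
  have key2 := congrArg (fun f : K →ₗ[ℝ] ℝ => f ⟨z, hz⟩) key
  have key3 : (gl w) ⬝ᵥ Θ *ᵥ z = z ⬝ᵥ Θ *ᵥ w := key2
  calc z ⬝ᵥ Θ *ᵥ (gl w) = (gl w) ⬝ᵥ Θ *ᵥ z := dotSymm hΘ _ _
    _ = z ⬝ᵥ Θ *ᵥ w := key3

private lemma exists_projs {m : ℕ} (K₁ K₂ : Submodule ℝ (Fin m → ℝ)) :
    ∃ P₀ P₁ P₂ P₃ : (Fin m → ℝ) →ₗ[ℝ] (Fin m → ℝ),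
      (∀ v, P₀ v + P₁ v + P₂ v + P₃ v = v) ∧
      (∀ v, P₀ v ∈ K₁ ⊓ K₂) ∧
      (∀ v, P₁ v ∈ K₁) ∧ (∀ v, P₂ v ∈ K₂) ∧
      (∀ v, P₁ v ∈ K₁ ⊓ K₂ → P₁ v = 0) ∧
      (∀ v, P₂ v ∈ K₁ ⊓ K₂ → P₂ v = 0) ∧
      (∀ u ∈ K₁, P₂ u = 0 ∧ P₃ u = 0) ∧
      (∀ u ∈ K₂, P₁ u = 0 ∧ P₃ u = 0) := by
  classical
  obtain ⟨U, hU⟩ := Submodule.exists_isCompl (K₁ ⊓ K₂)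
  obtain ⟨V₃, hV₃⟩ := Submodule.exists_isCompl (K₁ ⊔ K₂)
  set K₀ := K₁ ⊓ K₂ with hK₀
  set W₁ := K₁ ⊓ U with hW₁
  set W₂ := K₂ ⊓ U with hW₂
  have hdisj : ∀ x, x ∈ K₀ → x ∈ U → x = 0 := fun x h1 h2 =>
    Submodule.disjoint_def.mp hU.disjoint x h1 h2
  have hdisjV : ∀ x, x ∈ K₁ ⊔ K₂ → x ∈ V₃ → x = 0 := fun x h1 h2 =>
    Submodule.disjoint_def.mp hV₃.disjoint x h1 h2
  have hsplit1 : ∀ x ∈ K₁, ∃ a ∈ K₀, ∃ w ∈ W₁, x = a + w := by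
    intro x hx
    have hxT : x ∈ K₀ ⊔ U := by rw [hU.sup_eq_top]; trivial
    obtain ⟨a, ha, u, hu, hau⟩ := Submodule.mem_sup.mp hxT
    have huK₁ : u ∈ K₁ := by
      have : u = x - a := by rw [← hau]; ring
      rw [this]; exact Submodule.sub_mem _ hx ha.1
    exact ⟨a, ha, u, ⟨huK₁, hu⟩, hau.symm⟩
  have hsplit2 : ∀ x ∈ K₂, ∃ a ∈ K₀, ∃ w ∈ W₂, x = a + w := by
    intro x hx
    have hxT : x ∈ K₀ ⊔ U := by rw [hU.sup_eq_top]; trivial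
    obtain ⟨a, ha, u, hu, hau⟩ := Submodule.mem_sup.mp hxT
    have huK₂ : u ∈ K₂ := by
      have : u = x - a := by rw [← hau]; ring
      rw [this]; exact Submodule.sub_mem _ hx ha.2
    exact ⟨a, ha, u, ⟨huK₂, hu⟩, hau.symm⟩
  have hK1le : K₁ ≤ K₀ ⊔ W₁ := by
    intro x hx
    obtain ⟨a, ha, w, hw, rfl⟩ := hsplit1 x hx
    exact Submodule.add_mem _ (Submodule.mem_sup_left ha) (Submodule.mem_sup_right hw)
  have hK2le : K₂ ≤ K₀ ⊔ W₂ := by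
    intro x hx
    obtain ⟨a, ha, w, hw, rfl⟩ := hsplit2 x hx
    exact Submodule.add_mem _ (Submodule.mem_sup_left ha) (Submodule.mem_sup_right hw)
  -- the four complement facts
  have IC₀ : IsCompl K₀ (W₁ ⊔ (W₂ ⊔ V₃)) := by
    constructor
    · rw [Submodule.disjoint_def]
      intro x hx0 hxs
      obtain ⟨w₁, hw₁, y, hy, hsum⟩ := Submodule.mem_sup.mp hxs
      obtain ⟨w₂, hw₂, z, hz, hsum2⟩ := Submodule.mem_sup.mp hy
      have hzval : z = x - w₁ - w₂ := by rw [← hsum, ← hsum2]; ring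
      have hzS : z ∈ K₁ ⊔ K₂ := by
        rw [hzval]
        exact Submodule.sub_mem _ (Submodule.sub_mem _
          (Submodule.mem_sup_left hx0.1) (Submodule.mem_sup_left hw₁.1))
          (Submodule.mem_sup_right hw₂.1)
      have hz0 : z = 0 := hdisjV z hzS hz
      have hw₂K₁ : w₂ ∈ K₁ := by
        have : w₂ = x - w₁ := by rw [← hsum, ← hsum2, hz0]; ring
        rw [this]; exact Submodule.sub_mem _ hx0.1 hw₁.1
      have hw₂0 : w₂ = 0 := hdisj w₂ ⟨hw₂K₁, hw₂.1⟩ hw₂.2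
      have hxw₁ : x = w₁ := by rw [← hsum, ← hsum2, hz0, hw₂0]; ring
      exact hdisj x hx0 (hxw₁ ▸ hw₁.2)
    · rw [codisjoint_iff, eq_top_iff]
      intro x _
      have hxT : x ∈ (K₁ ⊔ K₂) ⊔ V₃ := by rw [hV₃.sup_eq_top]; trivial
      have h1 : K₁ ≤ K₀ ⊔ (W₁ ⊔ (W₂ ⊔ V₃)) := by
        refine hK1le.trans (sup_le_sup_left ?_ K₀)
        exact le_sup_left
      have h2 : K₂ ≤ K₀ ⊔ (W₁ ⊔ (W₂ ⊔ V₃)) := by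
        refine hK2le.trans (sup_le_sup_left ?_ K₀)
        exact le_sup_left.trans le_sup_right
      have h3 : V₃ ≤ K₀ ⊔ (W₁ ⊔ (W₂ ⊔ V₃)) := by
        exact (le_sup_right.trans le_sup_right).trans le_sup_right
      exact (sup_le (sup_le h1 h2) h3) hxT
  have IC₁ : IsCompl W₁ (K₂ ⊔ V₃) := by
    constructor
    · rw [Submodule.disjoint_def]
      intro x hx hxs
      obtain ⟨k, hk, z, hz, hsum⟩ := Submodule.mem_sup.mp hxs
      have hzval : z = x - k := by rw [← hsum]; ring
      have hzS : z ∈ K₁ ⊔ K₂ := by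
        rw [hzval]
        exact Submodule.sub_mem _ (Submodule.mem_sup_left hx.1) (Submodule.mem_sup_right hk)
      have hz0 : z = 0 := hdisjV z hzS hz
      have hxk : x = k := by rw [← hsum, hz0]; ring
      exact hdisj x ⟨hx.1, hxk ▸ hk⟩ hx.2
    · rw [codisjoint_iff, eq_top_iff]
      intro x _
      have hxT : x ∈ (K₁ ⊔ K₂) ⊔ V₃ := by rw [hV₃.sup_eq_top]; trivial
      have h1 : K₁ ≤ W₁ ⊔ (K₂ ⊔ V₃) := by
        refine le_trans hK1le (sup_le ?_ le_sup_left)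
        intro y hy
        exact Submodule.mem_sup_right (Submodule.mem_sup_left hy.2)
      have h2 : K₂ ≤ W₁ ⊔ (K₂ ⊔ V₃) := le_trans le_sup_left le_sup_right
      have h3 : V₃ ≤ W₁ ⊔ (K₂ ⊔ V₃) := le_trans le_sup_right le_sup_right
      exact (sup_le (sup_le h1 h2) h3) hxT
  have IC₂ : IsCompl W₂ (K₁ ⊔ V₃) := by
    constructor
    · rw [Submodule.disjoint_def]
      intro x hx hxs
      obtain ⟨k, hk, z, hz, hsum⟩ := Submodule.mem_sup.mp hxs
      have hzval : z = x - k := by rw [← hsum]; ring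
      have hzS : z ∈ K₁ ⊔ K₂ := by
        rw [hzval]
        exact Submodule.sub_mem _ (Submodule.mem_sup_right hx.1) (Submodule.mem_sup_left hk)
      have hz0 : z = 0 := hdisjV z hzS hz
      have hxk : x = k := by rw [← hsum, hz0]; ring
      exact hdisj x ⟨hxk ▸ hk, hx.1⟩ hx.2
    · rw [codisjoint_iff, eq_top_iff]
      intro x _
      have hxT : x ∈ (K₁ ⊔ K₂) ⊔ V₃ := by rw [hV₃.sup_eq_top]; trivial
      have h2 : K₂ ≤ W₂ ⊔ (K₁ ⊔ V₃) := by
        refine le_trans hK2le (sup_le ?_ le_sup_left)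
        intro y hy
        exact Submodule.mem_sup_right (Submodule.mem_sup_left hy.1)
      have h1 : K₁ ≤ W₂ ⊔ (K₁ ⊔ V₃) := le_trans le_sup_left le_sup_right
      have h3 : V₃ ≤ W₂ ⊔ (K₁ ⊔ V₃) := le_trans le_sup_right le_sup_right
      exact (sup_le (sup_le h1 h2) h3) hxT
  have IC₃ : IsCompl V₃ (K₁ ⊔ K₂) := hV₃.symm
  -- the four projections
  have left : ∀ {p q : Submodule ℝ (Fin m → ℝ)} (h : IsCompl p q) (x : Fin m → ℝ)
      (hx : x ∈ p), p.subtype (p.linearProjOfIsCompl q h x) = x :=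
    fun h x hx => congrArg Subtype.val (Submodule.linearProjOfIsCompl_apply_left h ⟨x, hx⟩)
  have right : ∀ {p q : Submodule ℝ (Fin m → ℝ)} (h : IsCompl p q) (x : Fin m → ℝ)
      (hx : x ∈ q), p.subtype (p.linearProjOfIsCompl q h x) = 0 := by
    intro p q h x hx
    have := congrArg Subtype.val (Submodule.linearProjOfIsCompl_apply_right h ⟨x, hx⟩)
    exact this
  refine ⟨K₀.subtype ∘ₗ K₀.linearProjOfIsCompl _ IC₀,
         W₁.subtype ∘ₗ W₁.linearProjOfIsCompl _ IC₁,
         W₂.subtype ∘ₗ W₂.linearProjOfIsCompl _ IC₂,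
         V₃.subtype ∘ₗ V₃.linearProjOfIsCompl _ IC₃, ?_, ?_, ?_, ?_, ?_, ?_, ?_, ?_⟩
  · -- sum identity
    intro v
    have hvT : v ∈ (K₁ ⊔ K₂) ⊔ V₃ := by rw [hV₃.sup_eq_top]; trivial
    obtain ⟨s, hs, z, hz, hsz⟩ := Submodule.mem_sup.mp hvT
    have hsS : s ∈ K₁ ⊔ W₂ := by
      refine (sup_le (le_sup_left : K₁ ≤ K₁ ⊔ W₂) ?_) hs
      refine le_trans hK2le (sup_le ?_ le_sup_right)
      intro y hy; exact Submodule.mem_sup_left hy.1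
    obtain ⟨k, hk, w₂, hw₂, hkw⟩ := Submodule.mem_sup.mp hsS
    obtain ⟨a, ha, w₁, hw₁, hk'⟩ := hsplit1 k hk
    have hv4 : v = a + w₁ + w₂ + z := by rw [← hsz, ← hkw, hk']
    simp only [LinearMap.comp_apply]
    rw [hv4]
    simp only [map_add]
    rw [left IC₀ a ha, right IC₀ w₁ (Submodule.mem_sup_left hw₁),
        right IC₀ w₂ (Submodule.mem_sup_right (Submodule.mem_sup_left hw₂)),
        right IC₀ z (Submodule.mem_sup_right (Submodule.mem_sup_right hz)),
        right IC₁ a (Submodule.mem_sup_left ha.2), left IC₁ w₁ hw₁,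
        right IC₁ w₂ (Submodule.mem_sup_left hw₂.1),
        right IC₁ z (Submodule.mem_sup_right hz),
        right IC₂ a (Submodule.mem_sup_left ha.1),
        right IC₂ w₁ (Submodule.mem_sup_left hw₁.1), left IC₂ w₂ hw₂,
        right IC₂ z (Submodule.mem_sup_right hz),
        right IC₃ a (Submodule.mem_sup_left ha.1),
        right IC₃ w₁ (Submodule.mem_sup_left hw₁.1),
        right IC₃ w₂ (Submodule.mem_sup_right hw₂.1), left IC₃ z hz]
    ring
  · intro v; exact ((K₀.linearProjOfIsCompl _ IC₀) v).2
  · intro v; exact ((W₁.linearProjOfIsCompl _ IC₁) v).2.1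
  · intro v; exact ((W₂.linearProjOfIsCompl _ IC₂) v).2.1
  · intro v hmem
    exact hdisj _ hmem ((W₁.linearProjOfIsCompl _ IC₁) v).2.2
  · intro v hmem
    exact hdisj _ hmem ((W₂.linearProjOfIsCompl _ IC₂) v).2.2
  · intro u hu
    exact ⟨right IC₂ u (Submodule.mem_sup_left hu),
           right IC₃ u (Submodule.mem_sup_left hu)⟩
  · intro u hu
    exact ⟨right IC₁ u (Submodule.mem_sup_left hu),
           right IC₃ u (Submodule.mem_sup_right hu)⟩

/-- projection lemma (Gahinet–Apkarian), converse direction: if `Θ₀` is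
negative definite on `ker Z₁` and on `ker Z₂`, then there exists `X` with
`Θ₀ + Z₁ᵀ X Z₂ + Z₂ᵀ Xᵀ Z₁ ≺ 0`. -/
theorem stmt4 {m k₁ k₂ : ℕ} (Θ₀ : Matrix (Fin m) (Fin m) ℝ) (hΘ : Θ₀.IsSymm)
    (Z₁ : Matrix (Fin k₁) (Fin m) ℝ) (Z₂ : Matrix (Fin k₂) (Fin m) ℝ)
    (h1 : ∀ v : Fin m → ℝ, Z₁.mulVec v = 0 → v ≠ 0 → v ⬝ᵥ Θ₀.mulVec v < 0)
    (h2 : ∀ v : Fin m → ℝ, Z₂.mulVec v = 0 → v ≠ 0 → v ⬝ᵥ Θ₀.mulVec v < 0) :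
    ∃ X : Matrix (Fin k₁) (Fin k₂) ℝ,
      NegDef (Θ₀ + Z₁ᵀ * X * Z₂ + Z₂ᵀ * Xᵀ * Z₁) := by
  classical
  set K₁ : Submodule ℝ (Fin m → ℝ) := LinearMap.ker (Matrix.mulVecLin Z₁) with hK₁def
  set K₂ : Submodule ℝ (Fin m → ℝ) := LinearMap.ker (Matrix.mulVecLin Z₂) with hK₂def
  have memK₁ : ∀ v, v ∈ K₁ ↔ Z₁ *ᵥ v = 0 := fun v => by
    simp [hK₁def, LinearMap.mem_ker]
  have memK₂ : ∀ v, v ∈ K₂ ↔ Z₂ *ᵥ v = 0 := fun v => by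
    simp [hK₂def, LinearMap.mem_ker]
  have hND₁ : ∀ z ∈ K₁, z ≠ 0 → z ⬝ᵥ Θ₀ *ᵥ z < 0 := fun z hz => h1 z ((memK₁ z).mp hz)
  have hND₂ : ∀ z ∈ K₂, z ≠ 0 → z ⬝ᵥ Θ₀ *ᵥ z < 0 := fun z hz => h2 z ((memK₂ z).mp hz)
  obtain ⟨G, hGmem, hGstar⟩ := exists_G Θ₀ hΘ (K₁ ⊓ K₂) (fun z hz => hND₁ z hz.1)
  obtain ⟨Q₀, Q₁, Q₂, Q₃, hsum, h0mem, h1mem, h2mem, h1w, h2w, hkill1, hkill2⟩ :=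
    exists_projs K₁ K₂
  set P₀ := LinearMap.toMatrix' Q₀ with hP₀def
  set P₁ := LinearMap.toMatrix' Q₁ with hP₁def
  set P₂ := LinearMap.toMatrix' Q₂ with hP₂def
  set P₃ := LinearMap.toMatrix' Q₃ with hP₃def
  have hP : ∀ (Q : (Fin m → ℝ) →ₗ[ℝ] (Fin m → ℝ)) v, (LinearMap.toMatrix' Q) *ᵥ v = Q v := by
    intro Q v; rw [← Matrix.toLin'_apply, Matrix.toLin'_toMatrix']
  set D₀ := Gᵀ * Θ₀ * G - Θ₀ with hD₀def
  set C := (P₂ + P₃)ᵀ * D₀ * P₁ + P₂ᵀ * D₀ * P₃ + (1/2 : ℝ) • (P₃ᵀ * D₀ * P₃)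
      - (1/2 : ℝ) • (P₃ᵀ * 1 * P₃) with hCdef
  have hCr : ∀ w, Z₂ *ᵥ w = 0 → C *ᵥ w = 0 := by
    intro w hw
    have h1' : P₁ *ᵥ w = 0 := by
      rw [hP₁def, hP]; exact (hkill2 w ((memK₂ w).mpr hw)).1
    have h3' : P₃ *ᵥ w = 0 := by
      rw [hP₃def, hP]; exact (hkill2 w ((memK₂ w).mpr hw)).2
    rw [hCdef]
    simp only [Matrix.sub_mulVec, Matrix.add_mulVec, Matrix.smul_mulVec,
      ← Matrix.mulVec_mulVec, h1', h3', Matrix.mulVec_zero, smul_zero, add_zero, sub_zero]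
  have hCl : ∀ u, Z₁ *ᵥ u = 0 → Cᵀ *ᵥ u = 0 := by
    intro u hu
    have h2' : P₂ *ᵥ u = 0 := by
      rw [hP₂def, hP]; exact (hkill1 u ((memK₁ u).mpr hu)).1
    have h3' : P₃ *ᵥ u = 0 := by
      rw [hP₃def, hP]; exact (hkill1 u ((memK₁ u).mpr hu)).2
    rw [hCdef]
    simp only [Matrix.transpose_sub, Matrix.transpose_add, Matrix.transpose_smul,
      Matrix.transpose_mul, Matrix.transpose_transpose, Matrix.transpose_one,
      Matrix.sub_mulVec, Matrix.add_mulVec, Matrix.smul_mulVec,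
      ← Matrix.mulVec_mulVec, h2', h3', Matrix.mulVec_zero, smul_zero, add_zero,
      zero_add, sub_zero, Matrix.mulVec_add]
  obtain ⟨X, hX⟩ := exists_factor Z₁ Z₂ C hCl hCr
  refine ⟨X, ?_⟩
  intro v hv
  have hfacT : Z₂ᵀ * Xᵀ * Z₁ = Cᵀ := by
    rw [← hX]
    simp [Matrix.transpose_mul, Matrix.mul_assoc]
  show v ⬝ᵥ (Θ₀ + Z₁ᵀ * X * Z₂ + Z₂ᵀ * Xᵀ * Z₁) *ᵥ v < 0
  rw [hX, hfacT]
  rw [Matrix.add_mulVec, Matrix.add_mulVec, dotProduct_add, dotProduct_add]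
  have hCT : v ⬝ᵥ Cᵀ *ᵥ v = v ⬝ᵥ C *ᵥ v := by
    rw [Matrix.dotProduct_mulVec, Matrix.vecMul_transpose, dotProduct_comm]
  rw [hCT]
  -- components
  obtain ⟨a, ha⟩ : ∃ x, x = Q₀ v := ⟨_, rfl⟩
  obtain ⟨b, hb⟩ : ∃ x, x = Q₁ v := ⟨_, rfl⟩
  obtain ⟨c, hc⟩ : ∃ x, x = Q₂ v := ⟨_, rfl⟩
  obtain ⟨d, hd⟩ : ∃ x, x = Q₃ v := ⟨_, rfl⟩
  have hv4 : a + b + c + d = v := by rw [ha, hb, hc, hd]; exact hsum v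
  have hPa : P₀ *ᵥ v = a := by rw [hP₀def, hP, ha]
  have hPb : P₁ *ᵥ v = b := by rw [hP₁def, hP, hb]
  have hPc : P₂ *ᵥ v = c := by rw [hP₂def, hP, hc]
  have hPd : P₃ *ᵥ v = d := by rw [hP₃def, hP, hd]
  obtain ⟨cc, hcc⟩ : ∃ x, x = a + G *ᵥ b + G *ᵥ c + G *ᵥ d := ⟨_, rfl⟩
  obtain ⟨d₁, hd₁⟩ : ∃ x, x = b - G *ᵥ b := ⟨_, rfl⟩
  obtain ⟨d₂, hd₂⟩ : ∃ x, x = c - G *ᵥ c := ⟨_, rfl⟩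
  have haK₀ : a ∈ K₁ ⊓ K₂ := ha ▸ h0mem v
  have hccK₁ : cc ∈ K₁ := by
    rw [hcc]
    exact Submodule.add_mem _ (Submodule.add_mem _ (Submodule.add_mem _ haK₀.1
      (hGmem b).1) (hGmem c).1) (hGmem d).1
  have hd₁K₁ : d₁ ∈ K₁ := by
    rw [hd₁]; exact Submodule.sub_mem _ (hb ▸ h1mem v) (hGmem b).1
  have hd₂K₂ : d₂ ∈ K₂ := by
    rw [hd₂]; exact Submodule.sub_mem _ (hc ▸ h2mem v) (hGmem c).2
  -- the key algebraic identity
  have hDval : ∀ x y, x ⬝ᵥ D₀ *ᵥ y = (G *ᵥ x) ⬝ᵥ Θ₀ *ᵥ (G *ᵥ y) - x ⬝ᵥ Θ₀ *ᵥ y := by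
    intro x y
    rw [hD₀def, Matrix.sub_mulVec, dotProduct_sub, sandwich]
  have hCv : v ⬝ᵥ C *ᵥ v =
      ((G *ᵥ c) ⬝ᵥ Θ₀ *ᵥ (G *ᵥ b) - c ⬝ᵥ Θ₀ *ᵥ b)
      + ((G *ᵥ d) ⬝ᵥ Θ₀ *ᵥ (G *ᵥ b) - d ⬝ᵥ Θ₀ *ᵥ b)
      + ((G *ᵥ c) ⬝ᵥ Θ₀ *ᵥ (G *ᵥ d) - c ⬝ᵥ Θ₀ *ᵥ d)
      + (1/2 : ℝ) * ((G *ᵥ d) ⬝ᵥ Θ₀ *ᵥ (G *ᵥ d) - d ⬝ᵥ Θ₀ *ᵥ d)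
      - (1/2 : ℝ) * (d ⬝ᵥ d) := by
    rw [hCdef]
    rw [Matrix.sub_mulVec, Matrix.add_mulVec, Matrix.add_mulVec,
      dotProduct_sub, dotProduct_add, dotProduct_add,
      Matrix.smul_mulVec, Matrix.smul_mulVec,
      dotProduct_smul, dotProduct_smul,
      sandwich, sandwich, sandwich, sandwich]
    rw [Matrix.add_mulVec, hPb, hPc, hPd]
    rw [add_dotProduct]
    rw [hDval, hDval, hDval, hDval, Matrix.one_mulVec]
    simp only [smul_eq_mul]
  have hsym : ∀ x y, x ⬝ᵥ Θ₀ *ᵥ y = y ⬝ᵥ Θ₀ *ᵥ x := fun x y => dotSymm hΘ x y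
  have hred : ∀ x y, (G *ᵥ x) ⬝ᵥ Θ₀ *ᵥ (G *ᵥ y) = (G *ᵥ x) ⬝ᵥ Θ₀ *ᵥ y :=
    fun x y => hGstar (G *ᵥ x) (hGmem x) y
  have hreda : ∀ y, a ⬝ᵥ Θ₀ *ᵥ (G *ᵥ y) = a ⬝ᵥ Θ₀ *ᵥ y := fun y => hGstar a haK₀ y
  have hqid : v ⬝ᵥ Θ₀ *ᵥ v + v ⬝ᵥ C *ᵥ v + v ⬝ᵥ C *ᵥ v
      = cc ⬝ᵥ Θ₀ *ᵥ cc + d₁ ⬝ᵥ Θ₀ *ᵥ d₁ + d₂ ⬝ᵥ Θ₀ *ᵥ d₂ - d ⬝ᵥ d := by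
    rw [hCv, hcc, hd₁, hd₂, ← hv4]
    simp only [Matrix.mulVec_add, dotProduct_add, add_dotProduct,
      Matrix.mulVec_sub, dotProduct_sub, sub_dotProduct]
    linarith [hred b b, hred b c, hred b d, hred c b, hred c c, hred c d,
      hred d b, hred d c, hred d d,
      hreda b, hreda c, hreda d,
      hsym a (G *ᵥ b), hsym a (G *ᵥ c), hsym a (G *ᵥ d),
      hsym b (G *ᵥ b), hsym b (G *ᵥ c), hsym b (G *ᵥ d),
      hsym c (G *ᵥ b), hsym c (G *ᵥ c), hsym c (G *ᵥ d),
      hsym d (G *ᵥ b), hsym d (G *ᵥ c), hsym d (G *ᵥ d),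
      hsym (G *ᵥ b) (G *ᵥ c), hsym (G *ᵥ b) (G *ᵥ d), hsym (G *ᵥ c) (G *ᵥ d),
      hsym a b, hsym a c, hsym a d, hsym b c, hsym b d, hsym c d]
  rw [show v ⬝ᵥ Θ₀ *ᵥ v + v ⬝ᵥ C *ᵥ v + v ⬝ᵥ C *ᵥ v
      = cc ⬝ᵥ Θ₀ *ᵥ cc + d₁ ⬝ᵥ Θ₀ *ᵥ d₁ + d₂ ⬝ᵥ Θ₀ *ᵥ d₂ - d ⬝ᵥ d from hqid]
  -- negativity
  have nonpos₁ : ∀ z ∈ K₁, z ⬝ᵥ Θ₀ *ᵥ z ≤ 0 := by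
    intro z hz
    rcases eq_or_ne z 0 with rfl | h
    · simp
    · exact le_of_lt (hND₁ z hz h)
  have nonpos₂ : ∀ z ∈ K₂, z ⬝ᵥ Θ₀ *ᵥ z ≤ 0 := by
    intro z hz
    rcases eq_or_ne z 0 with rfl | h
    · simp
    · exact le_of_lt (hND₂ z hz h)
  have hccle : cc ⬝ᵥ Θ₀ *ᵥ cc ≤ 0 := nonpos₁ cc hccK₁
  have hd₁le : d₁ ⬝ᵥ Θ₀ *ᵥ d₁ ≤ 0 := nonpos₁ d₁ hd₁K₁
  have hd₂le : d₂ ⬝ᵥ Θ₀ *ᵥ d₂ ≤ 0 := nonpos₂ d₂ hd₂K₂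
  have hdd : (0:ℝ) ≤ d ⬝ᵥ d := Finset.sum_nonneg fun i _ => mul_self_nonneg (d i)
  rcases eq_or_ne d 0 with hdz | hdz
  · rcases eq_or_ne b 0 with hbz | hbz
    · rcases eq_or_ne c 0 with hcz | hcz
      · -- b = c = d = 0, so cc = a and a ≠ 0
        have hanz : a ≠ 0 := by
          intro haz
          apply hv
          rw [← hv4, haz, hbz, hcz, hdz]; simp
        have hccval : cc = a := by rw [hcc, hbz, hcz, hdz]; simp
        have : cc ⬝ᵥ Θ₀ *ᵥ cc < 0 := hND₁ cc hccK₁ (hccval ▸ hanz)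
        linarith
      · -- c ≠ 0 so d₂ ≠ 0
        have hd₂nz : d₂ ≠ 0 := by
          intro h0
          apply hcz
          have : c = G *ᵥ c := by
            have h := hd₂; rw [h0] at h
            exact (sub_eq_zero.mp h.symm)
          rw [hc]
          exact h2w v (by rw [← hc, this]; exact hGmem c)
        have : d₂ ⬝ᵥ Θ₀ *ᵥ d₂ < 0 := hND₂ d₂ hd₂K₂ hd₂nz
        linarith
    · -- b ≠ 0 so d₁ ≠ 0
      have hd₁nz : d₁ ≠ 0 := by
        intro h0
        apply hbz
        have : b = G *ᵥ b := by
          have h := hd₁; rw [h0] at h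
          exact (sub_eq_zero.mp h.symm)
        rw [hb]
        exact h1w v (by rw [← hb, this]; exact hGmem b)
      have : d₁ ⬝ᵥ Θ₀ *ᵥ d₁ < 0 := hND₁ d₁ hd₁K₁ hd₁nz
      linarith
  · -- d ≠ 0
    have hpos : 0 < d ⬝ᵥ d := by
      rcases lt_or_eq_of_le hdd with h | h
      · exact h
      · exact absurd (dotProduct_self_eq_zero.mp h.symm) hdz
    linarith
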